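/- arXiv:2012.03102 — 3 statements merged into one kernel-verified Lean document; each statement's English description precedes it below -/
import Mathlib

section
/- The series Σ_{k=2}^{∞} (ζ(k) − 1)/k converges and equals 1 − γ, where ζ is the Riemann zeta function and γ is the Euler–Mascheroni constant. -/
/-!
Writing `ζ(k) - 1 = ∑_{n ≥ 2} n⁻ᵏ` turns the series into the double series of the nonnegative
terms `n⁻ᵏ / k`. Summed over `k` first, the row of `n` is `-log (1 - 1/n) - 1/n
= log n - log (n - 1) - 1/n`, and these telescope to `1 - (H_N - log N) → 1 - γ`. Nonnegativity
makes the double series summable, so it may be summed over `n` first as well.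
-/

open Filter Finset Real

theorem HasSum.of_prod_fiberwise_of_nonneg {α β : Type*} {f : α × β → ℝ} (hf : 0 ≤ f)
    {g : α → ℝ} {a : ℝ} (hg : HasSum g a) (hfg : ∀ x, HasSum (fun y ↦ f (x, y)) (g x)) :
    HasSum f a := by
  have hsummable : Summable f := (summable_prod_of_nonneg hf).2
    ⟨fun x ↦ (hfg x).summable, by simpa only [(hfg _).tsum_eq] using hg.summable⟩
  simpa only [(hsummable.hasSum.prod_fiberwise hfg).unique hg] using hsummable.hasSum

theorem hasSum_pow_add_two_div {x : ℝ} (h : |x| < 1) :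
    HasSum (fun k : ℕ ↦ x ^ (k + 2) / (k + 2)) (-log (1 - x) - x) := by
  have := (hasSum_nat_add_iff' 1).mpr (hasSum_pow_div_log_of_abs_lt_one h)
  simpa [add_assoc, one_add_one_eq_two] using this

theorem neg_log_one_sub_inv {t : ℝ} (ht : 1 < t) : -log (1 - t⁻¹) = log t - log (t - 1) := by
  have ht0 : 0 < t := by linarith
  rw [show 1 - t⁻¹ = (t - 1) / t by field_simp, log_div (by linarith) ht0.ne']
  ring

theorem sum_range_neg_log_one_sub_inv_sub_inv (N : ℕ) :
    ∑ n ∈ range N, (-log (1 - ((n : ℝ) + 2)⁻¹) - ((n : ℝ) + 2)⁻¹) =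
      1 - (harmonic (N + 1) - log (N + 1)) := by
  induction N with
  | zero => simp
  | succ N ih =>
    rw [sum_range_succ, ih, neg_log_one_sub_inv (by linarith), harmonic_succ (N + 1)]
    push_cast
    ring_nf

theorem hasSum_inv_nat_add_two_pow_div (n : ℕ) :
    HasSum (fun k : ℕ ↦ ((n : ℝ) + 2)⁻¹ ^ (k + 2) / (k + 2))
      (-log (1 - ((n : ℝ) + 2)⁻¹) - ((n : ℝ) + 2)⁻¹) := by
  refine hasSum_pow_add_two_div ?_
  rw [abs_of_pos (by positivity)]
  exact inv_lt_one_of_one_lt₀ (by linarith [n.cast_nonneg (α := ℝ)])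

theorem hasSum_neg_log_one_sub_inv_sub_inv :
    HasSum (fun n : ℕ ↦ -log (1 - ((n : ℝ) + 2)⁻¹) - ((n : ℝ) + 2)⁻¹)
      (1 - eulerMascheroniConstant) := by
  rw [hasSum_iff_tendsto_nat_of_nonneg fun n ↦
    (hasSum_inv_nat_add_two_pow_div n).nonneg fun k ↦ by positivity]
  simp only [sum_range_neg_log_one_sub_inv_sub_inv]
  refine tendsto_const_nhds.sub ?_
  exact_mod_cast tendsto_harmonic_sub_log.comp (tendsto_add_atTop_nat 1)

theorem hasSum_inv_nat_add_two_pow (k : ℕ) :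
    HasSum (fun n : ℕ ↦ ((((n : ℝ) + 2)⁻¹ ^ (k + 2) : ℝ) : ℂ)) (riemannZeta (k + 2) - 1) := by
  have hk : 1 < k + 2 := by omega
  have hsummable : Summable (fun n : ℕ ↦ 1 / (n : ℂ) ^ (k + 2)) := by
    simpa [← Complex.cpow_natCast] using
      Complex.summable_one_div_nat_cpow.2 (by simp; linarith [k.cast_nonneg (α := ℝ)])
  have hzeta := zeta_nat_eq_tsum_of_gt_one hk ▸ hsummable.hasSum
  have := (hasSum_nat_add_iff' 2).2 hzeta
  push_cast at this ⊢
  simpa [sum_range_succ, add_assoc, one_add_one_eq_two] using this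

/-- The series `Σ_{k=2}^{∞} (ζ(k) − 1)/k` converges and equals `1 − γ`, where `ζ` is the
Riemann zeta function and `γ` is the Euler–Mascheroni constant. -/
theorem hasSum_zeta_sub_one_div : HasSum (fun k : ℕ => (riemannZeta (k + 2) - 1) / (k + 2))
    ((1 : ℂ) - (Real.eulerMascheroniConstant : ℂ)) := by
  have hdouble : HasSum (fun p : ℕ × ℕ ↦ ((p.1 : ℝ) + 2)⁻¹ ^ (p.2 + 2) / (p.2 + 2))
      (1 - eulerMascheroniConstant) :=
    hasSum_neg_log_one_sub_inv_sub_inv.of_prod_fiberwise_of_nonneg (fun _ ↦ by positivity)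
      hasSum_inv_nat_add_two_pow_div
  have hswap := (Equiv.prodComm ℕ ℕ).hasSum_iff.2 (Complex.hasSum_ofReal.2 hdouble)
  push_cast at hswap
  exact hswap.prod_fiberwise fun k ↦ by
    simpa using (hasSum_inv_nat_add_two_pow k).div_const ((k : ℂ) + 2)
end

section
/- Define 𝒫(x) = Σ_{2 ≤ k ≤ x} P(k)/k, where P(k) = Σ_p 1/p^k is the prime zeta function (sum over all rational primes p). Then for every real x ≥ 1, 𝒫(x) < 1 − γ, where γ is the Euler–Mascheroni constant. -/
/-- The prime zeta function `P(k) = Σ_p p^{-k}` (sum over all rational primes). -/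
noncomputable def primeZeta (k : ℕ) : ℝ :=
  ∑' p : {p : ℕ // p.Prime}, (1 : ℝ) / (p : ℝ) ^ k

/-- `𝒫(x) = Σ_{2 ≤ k ≤ x} P(k)/k`. -/
noncomputable def PP (x : ℝ) : ℝ := ∑ k ∈ Finset.Icc 2 ⌊x⌋₊, primeZeta k / (k : ℝ)

/-!
Expanding `P(k)` and exchanging the finite sum over `k` with the sum over primes gives
`𝒫(x) ≤ ∑_p ∑_{k ≥ 2} p^{-k}/k`. The inner series is at most `y²/2 + y³/3 + y⁴/4 + y⁵/(5(1-y))`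
with `y = 1/p`: three exact terms and a geometric tail. The primes `2, 3, 5, 7` are evaluated
exactly; every larger prime is odd and contributes at most `(11/20) p⁻²`, and the odd reciprocal
squares from `11` on telescope to at most `1/20`. The total is below `1/3`, while `γ < 2/3`.
-/

open Finset

theorem sum_Icc_pow_div_le {y : ℝ} (hy0 : 0 ≤ y) (hy1 : y < 1) {m : ℕ} (hm : 0 < m) (a N : ℕ) :
    ∑ k ∈ Icc a N, y ^ k / k ≤ ∑ k ∈ Ico a m, y ^ k / k + y ^ m / (m * (1 - y)) := by
  have hcover : Icc a N ⊆ Ico a m ∪ Ico m (N + 1) := by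
    intro k hk
    simp only [mem_union, mem_Ico, mem_Icc] at hk ⊢
    omega
  have htail : ∑ k ∈ Ico m (N + 1), y ^ k / k ≤ y ^ m / (m * (1 - y)) :=
    calc ∑ k ∈ Ico m (N + 1), y ^ k / k
        ≤ ∑ k ∈ Ico m (N + 1), y ^ k / m := sum_le_sum fun k hk =>
          div_le_div_of_nonneg_left (pow_nonneg hy0 k) (by positivity)
            (by exact_mod_cast (mem_Ico.1 hk).1)
      _ = (∑ k ∈ Ico m (N + 1), y ^ k) / m := (sum_div ..).symm
      _ ≤ y ^ m / (1 - y) / m := by gcongr; exact geom_sum_Ico_le_of_lt_one hy0 hy1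
      _ = y ^ m / (m * (1 - y)) := by rw [div_div, mul_comm]
  calc ∑ k ∈ Icc a N, y ^ k / k
      ≤ ∑ k ∈ Ico a m ∪ Ico m (N + 1), y ^ k / k :=
        sum_le_sum_of_subset_of_nonneg hcover fun _ _ _ => by positivity
    _ ≤ ∑ k ∈ Ico a m, y ^ k / k + ∑ k ∈ Ico m (N + 1), y ^ k / k := by
        rw [← sum_union_inter]
        exact le_add_of_nonneg_right (sum_nonneg fun _ _ => by positivity)
    _ ≤ _ := by gcongr

noncomputable def logTailMajorant (y : ℝ) : ℝ :=
  y ^ 2 / 2 + y ^ 3 / 3 + y ^ 4 / 4 + y ^ 5 / (5 * (1 - y))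

theorem sum_Icc_pow_div_le_logTailMajorant {y : ℝ} (hy0 : 0 ≤ y) (hy1 : y < 1) (N : ℕ) :
    ∑ k ∈ Icc 2 N, y ^ k / k ≤ logTailMajorant y := by
  have h := sum_Icc_pow_div_le hy0 hy1 (m := 5) (by norm_num) 2 N
  norm_num [sum_Ico_eq_sum_range, sum_range_succ] at h
  unfold logTailMajorant
  linarith

theorem logTailMajorant_nonneg {y : ℝ} (hy0 : 0 ≤ y) (hy1 : y < 1) : 0 ≤ logTailMajorant y := by
  have : 0 < 1 - y := by linarith
  unfold logTailMajorant
  positivity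

theorem logTailMajorant_le_sq {y : ℝ} (hy0 : 0 ≤ y) (hy : y ≤ 1 / 11) :
    logTailMajorant y ≤ 11 / 20 * y ^ 2 := by
  have hlast : y ^ 5 / (5 * (1 - y)) ≤ y ^ 5 * (11 / 50) := by
    rw [div_le_iff₀ (by linarith)]
    nlinarith [pow_nonneg hy0 5]
  unfold logTailMajorant
  nlinarith [pow_nonneg hy0 2, pow_nonneg hy0 3, pow_nonneg hy0 4,
    mul_nonneg (pow_nonneg hy0 2) hy0]

theorem sum_range_one_div_two_mul_add_sq_le {a : ℝ} (ha : 1 < a) (n : ℕ) :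
    ∑ j ∈ range n, 1 / (2 * j + a) ^ 2 ≤ 1 / (2 * (a - 1)) := by
  set u : ℕ → ℝ := fun j => 1 / (2 * (2 * j + a - 1))
  have hstep : ∀ j : ℕ, 1 / (2 * j + a) ^ 2 ≤ u j - u (j + 1) := by
    intro j
    have hj : (0 : ℝ) ≤ j := j.cast_nonneg
    have hu : u j - u (j + 1) = 1 / ((2 * j + a - 1) * (2 * j + a + 1)) := by
      have h₁ : 2 * (j : ℝ) + a - 1 ≠ 0 := by linarith
      have h₂ : 2 * ((j : ℝ) + 1) + a - 1 ≠ 0 := by linarith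
      simp only [u]; push_cast
      field_simp
      ring
    rw [hu]
    exact one_div_le_one_div_of_le (by nlinarith) (by nlinarith)
  calc ∑ j ∈ range n, 1 / (2 * j + a) ^ 2
      ≤ ∑ j ∈ range n, (u j - u (j + 1)) := sum_le_sum fun j _ => hstep j
    _ = u 0 - u n := sum_range_sub' u n
    _ ≤ 1 / (2 * (a - 1)) := by
        have : 0 ≤ u n := one_div_nonneg.2 (by have := n.cast_nonneg (α := ℝ); linarith)
        simp only [u] at this ⊢; norm_num; linarith

theorem sum_range_comp_two_mul_le {f : ℕ → ℝ} {a c : ℝ} (ha : 1 < a) (hf : ∀ n, 0 ≤ f n)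
    (heven : ∀ j : ℕ, f (2 * j) ≤ c / (2 * j + a) ^ 2) (n : ℕ) :
    ∑ j ∈ range n, f (2 * j) ≤ c / (2 * (a - 1)) := by
  have hc : 0 ≤ c := by
    have hpos : (0 : ℝ) < (2 * (0 : ℕ) + a) ^ 2 := by
      simp only [Nat.cast_zero, mul_zero, zero_add]; exact pow_pos (by linarith) 2
    simpa using (le_div_iff₀ hpos).1 ((hf 0).trans (heven 0))
  calc ∑ j ∈ range n, f (2 * j)
      ≤ ∑ j ∈ range n, c * (1 / (2 * j + a) ^ 2) :=
        sum_le_sum fun j _ => (heven j).trans_eq (mul_one_div _ _).symm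
    _ = c * ∑ j ∈ range n, 1 / (2 * j + a) ^ 2 := (mul_sum ..).symm
    _ ≤ c * (1 / (2 * (a - 1))) := by gcongr; exact sum_range_one_div_two_mul_add_sq_le ha n
    _ = c / (2 * (a - 1)) := mul_one_div _ _

theorem summable_of_odd_eq_zero {f : ℕ → ℝ} {a c : ℝ} (ha : 1 < a) (hf : ∀ n, 0 ≤ f n)
    (hodd : ∀ j : ℕ, f (2 * j + 1) = 0) (heven : ∀ j : ℕ, f (2 * j) ≤ c / (2 * j + a) ^ 2) :
    Summable f :=
  Summable.even_add_odd
    (summable_of_sum_range_le (fun j => hf _) (sum_range_comp_two_mul_le ha hf heven))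
    (by simp only [hodd]; exact summable_zero)

theorem tsum_le_of_odd_eq_zero {f : ℕ → ℝ} {a c : ℝ} (ha : 1 < a) (hf : ∀ n, 0 ≤ f n)
    (hodd : ∀ j : ℕ, f (2 * j + 1) = 0) (heven : ∀ j : ℕ, f (2 * j) ≤ c / (2 * j + a) ^ 2) :
    ∑' n, f n ≤ c / (2 * (a - 1)) := by
  have hsum :=
    summable_of_sum_range_le (fun j => hf (2 * j)) (sum_range_comp_two_mul_le ha hf heven)
  rw [← tsum_even_add_odd hsum (by simp only [hodd]; exact summable_zero)]
  simp only [hodd, tsum_zero, add_zero]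
  exact Real.tsum_le_of_sum_range_le (fun j => hf _) (sum_range_comp_two_mul_le ha hf heven)

noncomputable def primeLogTail : ℕ → ℝ :=
  {n : ℕ | n.Prime}.indicator fun n => logTailMajorant (1 / n)

theorem one_div_prime_mem_Ico {p : ℕ} (hp : p.Prime) : (1 / p : ℝ) ∈ Set.Ico 0 1 := by
  have : (1 : ℝ) < p := by exact_mod_cast hp.one_lt
  exact ⟨by positivity, (div_lt_one (by linarith)).2 this⟩

theorem primeLogTail_nonneg (n : ℕ) : 0 ≤ primeLogTail n := by
  unfold primeLogTail
  exact Set.indicator_nonneg (fun p hp => logTailMajorant_nonneg (one_div_prime_mem_Ico hp).1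
    (one_div_prime_mem_Ico hp).2) n

theorem primeLogTail_odd_add_eleven (j : ℕ) : primeLogTail (2 * j + 1 + 11) = 0 := by
  refine Set.indicator_of_notMem (fun hp => ?_) _
  have h := (Nat.Prime.even_iff hp).1 ⟨j + 6, by ring⟩
  omega

theorem primeLogTail_even_add_eleven_le (j : ℕ) :
    primeLogTail (2 * j + 11) ≤ 11 / 20 / (2 * j + 11) ^ 2 := by
  by_cases hp : (2 * j + 11).Prime
  · rw [primeLogTail, Set.indicator_of_mem (s := {n : ℕ | n.Prime}) hp]
    have h11 : (11 : ℝ) ≤ (2 * j + 11 : ℕ) := by exact_mod_cast (by omega : 11 ≤ 2 * j + 11)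
    calc logTailMajorant (1 / (2 * j + 11 : ℕ))
        ≤ 11 / 20 * (1 / (2 * j + 11 : ℕ)) ^ 2 :=
          logTailMajorant_le_sq (by positivity) (one_div_le_one_div_of_le (by norm_num) h11)
      _ = 11 / 20 / (2 * j + 11) ^ 2 := by push_cast; rw [one_div_pow, mul_one_div]
  · rw [primeLogTail, Set.indicator_of_notMem (s := {n : ℕ | n.Prime}) hp]
    positivity

theorem summable_primeLogTail : Summable primeLogTail :=
  (summable_nat_add_iff 11).1 <| summable_of_odd_eq_zero (by norm_num : (1 : ℝ) < 11)
    (fun n => primeLogTail_nonneg _) primeLogTail_odd_add_eleven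
    (by exact_mod_cast primeLogTail_even_add_eleven_le)

theorem tsum_primeLogTail_le : ∑' n, primeLogTail n ≤ 1 / 3 := by
  have htail : ∑' n, primeLogTail (n + 11) ≤ 11 / 20 / (2 * (11 - 1)) :=
    tsum_le_of_odd_eq_zero (by norm_num) (fun n => primeLogTail_nonneg _)
      primeLogTail_odd_add_eleven (by exact_mod_cast primeLogTail_even_add_eleven_le)
  have hhead : ∑ n ∈ range 11, primeLogTail n =
      logTailMajorant (1 / 2) + logTailMajorant (1 / 3) + logTailMajorant (1 / 5)
        + logTailMajorant (1 / 7) := by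
    norm_num [sum_range_succ, primeLogTail, Set.indicator]
  rw [← summable_primeLogTail.sum_add_tsum_nat_add 11, hhead]
  norm_num [logTailMajorant] at htail ⊢
  linarith

theorem summable_one_div_prime_pow_div {k : ℕ} (hk : 2 ≤ k) :
    Summable fun p : {p : ℕ // p.Prime} => (1 / (p : ℝ)) ^ k / k := by
  have h := (Real.summable_one_div_nat_pow.2 (by omega : 1 < k)).subtype {p : ℕ | p.Prime}
  exact (h.div_const (k : ℝ)).congr fun p => by simp only [Function.comp_apply, one_div_pow]

theorem PP_eq_tsum (x : ℝ) :
    PP x = ∑' p : {p : ℕ // p.Prime}, ∑ k ∈ Icc 2 ⌊x⌋₊, (1 / (p : ℝ)) ^ k / k := by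
  rw [Summable.tsum_finsetSum fun k hk => summable_one_div_prime_pow_div (mem_Icc.1 hk).1, PP]
  refine sum_congr rfl fun k _ => ?_
  simp only [primeZeta, tsum_div_const, one_div_pow]

theorem PP_lt_one_sub_gamma_general (x : ℝ) :
    PP x < 1 - Real.eulerMascheroniConstant := by
  have hterms := fun k (hk : k ∈ Icc 2 ⌊x⌋₊) => summable_one_div_prime_pow_div (mem_Icc.1 hk).1
  calc PP x = ∑' p : {p : ℕ // p.Prime}, ∑ k ∈ Icc 2 ⌊x⌋₊, (1 / (p : ℝ)) ^ k / k := PP_eq_tsum x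
    _ ≤ ∑' p : {p : ℕ // p.Prime}, logTailMajorant (1 / p) :=
        Summable.tsum_le_tsum
          (fun p => sum_Icc_pow_div_le_logTailMajorant (one_div_prime_mem_Ico p.2).1
            (one_div_prime_mem_Ico p.2).2 _)
          (summable_sum hterms) (summable_subtype_iff_indicator.2 summable_primeLogTail)
    _ = ∑' n, primeLogTail n :=
        _root_.tsum_subtype {n : ℕ | n.Prime} fun n : ℕ => logTailMajorant (1 / n)
    _ ≤ 1 / 3 := tsum_primeLogTail_le
    _ < 1 - Real.eulerMascheroniConstant := by
        linarith [Real.eulerMascheroniConstant_lt_two_thirds]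

/-- For every real `x ≥ 1`, `𝒫(x) < 1 − γ`, where `γ` is the Euler–Mascheroni constant. -/
theorem PP_lt_one_sub_gamma (x : ℝ) (hx : 1 ≤ x) :
    PP x < 1 - Real.eulerMascheroniConstant :=
  PP_lt_one_sub_gamma_general x
end

section
/- Let K be a number field of degree d with ring of integers O_K. Then for every real x ≥ 2, the sum of 1/N(𝔭) over all prime ideals 𝔭 of O_K whose norm N(𝔭) is a proper prime power (i.e. N(𝔭) = p^ℓ for a rational prime p and an integer ℓ ≥ 2) and satisfies N(𝔭) ≤ x, is at most 0.32·d. -/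
/-!
A prime `𝔭` of norm `p ^ ℓ` contains `p`, so the primes whose norm is a proper power of `p` are
distinct prime factors of `(p)`. The product of their norms divides `N((p)) = p ^ d`, hence there
are at most `d / 2` of them, each contributing at most `1 / p²`. Summing over `p` gives at most
`(d / 2) ∑ₚ p⁻² ≤ (d / 2)(1/4 + 1/9 + 1/4) = 11 d / 36 < 0.32 d`.
-/

open Finset NumberField

-- `2` and `3` contribute `1/4 + 1/9`, the other primes at most `∑_{n ≥ 5} n⁻² ≤ 1/4`.
lemma sum_inv_sq_le_of_forall_prime {Q : Finset ℕ} (hQ : ∀ q ∈ Q, q.Prime) :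
    ∑ q ∈ Q, ((q : ℝ) ^ 2)⁻¹ ≤ 11 / 18 := by
  classical
  rw [← sum_filter_add_sum_filter_not Q (· ≤ 4)]
  have hsmall : Q.filter (· ≤ 4) ⊆ {2, 3} := by
    intro q hq
    obtain ⟨hqQ, hq4⟩ := mem_filter.mp hq
    have hq := hQ q hqQ
    revert hq
    interval_cases q <;> decide
  have hlarge : Q.filter (¬ · ≤ 4) ⊆ Ioc 4 (max 4 (Q.sup id)) := fun q hq ↦ by
    obtain ⟨hqQ, hq4⟩ := mem_filter.mp hq
    exact mem_Ioc.mpr ⟨by omega, le_max_of_le_right (le_sup (f := id) hqQ)⟩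
  have h23 := sum_le_sum_of_subset_of_nonneg (f := fun q : ℕ ↦ ((q : ℝ) ^ 2)⁻¹) hsmall
    fun q _ _ ↦ by positivity
  have htail := (sum_le_sum_of_subset_of_nonneg (f := fun q : ℕ ↦ ((q : ℝ) ^ 2)⁻¹) hlarge
    fun q _ _ ↦ by positivity).trans
    ((sum_Ioc_inv_sq_le_sub (α := ℝ) four_ne_zero (le_max_left _ _)).trans
      (sub_le_self _ (by positivity)))
  norm_num at h23
  linarith

namespace Ideal

variable {S : Type*} [CommRing S] [IsDedekindDomain S] [Module.Free ℤ S] [Module.Finite ℤ S]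

lemma prod_absNorm_dvd_pow_finrank {U : Finset (Ideal S)} (hU : ∀ P ∈ U, P.IsPrime ∧ P ≠ ⊥)
    {n : ℕ} (hn : ∀ P ∈ U, (n : S) ∈ P) :
    ∏ P ∈ U, absNorm P ∣ n ^ Module.finrank ℤ S := by
  have hdvd : ∏ P ∈ U, P ∣ span {(n : S)} :=
    U.prod_primes_dvd _ (fun P hP ↦ prime_of_isPrime (hU P hP).2 (hU P hP).1)
      fun P hP ↦ dvd_iff_le.mpr ((span_singleton_le_iff_mem _).mpr (hn P hP))
  rw [← map_prod, ← absNorm_span_natCast]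
  exact absNorm_dvd_absNorm_of_le (le_of_dvd hdvd)

lemma mul_card_le_finrank_of_absNorm_eq_pow {p k : ℕ} (hp : p.Prime) {U : Finset (Ideal S)}
    (hU : ∀ P ∈ U, P.IsPrime ∧ ∃ ℓ, k ≤ ℓ ∧ absNorm P = p ^ ℓ) :
    k * #U ≤ Module.finrank ℤ S := by
  have hprime : ∀ P ∈ U, P.IsPrime ∧ P ≠ ⊥ := fun P hP ↦ by
    obtain ⟨hPp, ℓ, -, hN⟩ := hU P hP
    refine ⟨hPp, fun hbot ↦ ?_⟩
    rw [hbot, absNorm_bot] at hN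
    exact pow_ne_zero ℓ hp.ne_zero hN.symm
  have hmem : ∀ P ∈ U, (p : S) ∈ P := fun P hP ↦ by
    obtain ⟨hPp, ℓ, -, hN⟩ := hU P hP
    have := absNorm_mem P
    rw [hN, Nat.cast_pow] at this
    exact hPp.mem_of_pow_mem ℓ this
  have hpow : p ^ (k * #U) ∣ ∏ P ∈ U, absNorm P := by
    rw [pow_mul, ← prod_const (s := U) (p ^ k)]
    refine prod_dvd_prod_of_dvd _ _ fun P hP ↦ ?_
    obtain ⟨-, ℓ, hℓ, hN⟩ := hU P hP
    rw [hN]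
    exact pow_dvd_pow p hℓ
  exact (Nat.pow_dvd_pow_iff_le_right hp.one_lt).mp
    (hpow.trans (prod_absNorm_dvd_pow_finrank hprime hmem))

lemma sum_inv_absNorm_le_of_absNorm_eq_pow {p : ℕ} (hp : p.Prime) {U : Finset (Ideal S)}
    (hU : ∀ P ∈ U, P.IsPrime ∧ ∃ ℓ, 2 ≤ ℓ ∧ absNorm P = p ^ ℓ) :
    ∑ P ∈ U, (absNorm P : ℝ)⁻¹ ≤ Module.finrank ℤ S / 2 * ((p : ℝ) ^ 2)⁻¹ := by
  have hterm : ∀ P ∈ U, (absNorm P : ℝ)⁻¹ ≤ ((p : ℝ) ^ 2)⁻¹ := fun P hP ↦ by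
    obtain ⟨-, ℓ, hℓ, hN⟩ := hU P hP
    rw [hN, Nat.cast_pow]
    exact inv_anti₀ (by have := hp.pos; positivity)
      (pow_le_pow_right₀ (by exact_mod_cast hp.one_le) hℓ)
  have hcard : (2 * #U : ℝ) ≤ Module.finrank ℤ S := by
    exact_mod_cast mul_card_le_finrank_of_absNorm_eq_pow hp hU
  calc ∑ P ∈ U, (absNorm P : ℝ)⁻¹ ≤ #U * ((p : ℝ) ^ 2)⁻¹ := by
        simpa using sum_le_card_nsmul U _ _ hterm
    _ ≤ Module.finrank ℤ S / 2 * ((p : ℝ) ^ 2)⁻¹ := by gcongr; linarith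

lemma sum_inv_absNorm_le_of_absNorm_eq_prime_pow {U : Finset (Ideal S)}
    (hU : ∀ P ∈ U, P.IsPrime ∧ ∃ p ℓ : ℕ, p.Prime ∧ 2 ≤ ℓ ∧ absNorm P = p ^ ℓ) :
    ∑ P ∈ U, (absNorm P : ℝ)⁻¹ ≤ 11 / 36 * Module.finrank ℤ S := by
  classical
  set below : Ideal S → ℕ := fun P ↦ (absNorm P).minFac
  have hbelow : ∀ P ∈ U, (below P).Prime ∧ P.IsPrime ∧ ∃ ℓ, 2 ≤ ℓ ∧ absNorm P = below P ^ ℓ :=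
    fun P hP ↦ by
      obtain ⟨hPp, p, ℓ, hp, hℓ, hN⟩ := hU P hP
      have : below P = p := by simp only [below, hN, hp.pow_minFac (k := ℓ) (by omega)]
      exact ⟨this ▸ hp, hPp, ℓ, hℓ, this ▸ hN⟩
  have hprime : ∀ q ∈ U.image below, q.Prime := by
    simp only [mem_image, forall_exists_index, and_imp, forall_apply_eq_imp_iff₂]
    exact fun P hP ↦ (hbelow P hP).1
  rw [← sum_fiberwise_of_maps_to fun P hP ↦ mem_image_of_mem below hP]
  calc _ ≤ ∑ q ∈ U.image below, Module.finrank ℤ S / 2 * ((q : ℝ) ^ 2)⁻¹ :=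
        sum_le_sum fun q hq ↦ sum_inv_absNorm_le_of_absNorm_eq_pow (hprime q hq) fun P hP ↦ by
          obtain ⟨hPU, rfl⟩ := mem_filter.mp hP
          exact (hbelow P hPU).2
    _ = Module.finrank ℤ S / 2 * ∑ q ∈ U.image below, ((q : ℝ) ^ 2)⁻¹ := (mul_sum _ _ _).symm
    _ ≤ Module.finrank ℤ S / 2 * (11 / 18) := by grw [sum_inv_sq_le_of_forall_prime hprime]
    _ = 11 / 36 * Module.finrank ℤ S := by ring

end Ideal

theorem sum_inv_norm_proper_prime_powers_le_general (K : Type*) [Field K] [NumberField K]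
    (d : ℕ) (hd : d = Module.finrank ℚ K) (x : ℝ) :
    (∑' P : {P : Ideal (NumberField.RingOfIntegers K) //
        P.IsPrime ∧ (∃ p ℓ : ℕ, p.Prime ∧ 2 ≤ ℓ ∧ Ideal.absNorm P = p ^ ℓ) ∧
        (Ideal.absNorm P : ℝ) ≤ x},
      (1 : ℝ) / (Ideal.absNorm P.1 : ℝ)) ≤ 0.32 * (d : ℝ) := by
  refine Real.tsum_le_of_sum_le (fun _ ↦ by positivity) fun s ↦ ?_
  calc ∑ P ∈ s, (1 : ℝ) / (Ideal.absNorm P.1 : ℝ)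
      = ∑ P ∈ s.map (.subtype _), (Ideal.absNorm P : ℝ)⁻¹ := by simp [one_div]
    _ ≤ 11 / 36 * Module.finrank ℤ (𝓞 K) :=
        Ideal.sum_inv_absNorm_le_of_absNorm_eq_prime_pow fun P hP ↦ by
          obtain ⟨⟨P, hPp, hpow, -⟩, -, rfl⟩ := mem_map.mp hP
          exact ⟨hPp, hpow⟩
    _ ≤ 0.32 * d := by
        rw [RingOfIntegers.rank, ← hd]
        gcongr
        norm_num

/-- Let `K` be a number field of degree `d`. For every real `x ≥ 2`, the sum of `1/N(𝔭)`
over the prime ideals `𝔭` of `O_K` whose norm is a proper prime power `p^ℓ` (`ℓ ≥ 2`)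
and satisfies `N(𝔭) ≤ x` is at most `0.32 d`. -/
theorem sum_inv_norm_proper_prime_powers_le (K : Type*) [Field K] [NumberField K]
    (d : ℕ) (hd : d = Module.finrank ℚ K) (x : ℝ) (hx : 2 ≤ x) :
    (∑' P : {P : Ideal (NumberField.RingOfIntegers K) //
        P.IsPrime ∧ (∃ p ℓ : ℕ, p.Prime ∧ 2 ≤ ℓ ∧ Ideal.absNorm P = p ^ ℓ) ∧
        (Ideal.absNorm P : ℝ) ≤ x},
      (1 : ℝ) / (Ideal.absNorm P.1 : ℝ)) ≤ 0.32 * (d : ℝ) :=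
  sum_inv_norm_proper_prime_powers_le_general K d hd x
end
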